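/- Let G be a finite acyclic directed graph with vertex set V whose edge set is partitioned into 1-edges E₁ and 2-edges E₂, satisfying axiom (B0): for each i ∈ {1,2}, every vertex has at most one entering and at most one leaving edge of color i. Let ℓ : V → {0, c, 1} be a labeling satisfying (B1(i)) (for each 1-edge (u,v), (ℓ(u),ℓ(v)) ∈ {(0,0),(0,c),(0,1),(c,1),(1,1)}) and (B1(ii)) (if v has no entering 1-edge then ℓ(v) ≠ 1, and if v has no leaving 1-edge then ℓ(v) ≠ 0). Then every 1-string of G contains exactly one central element: either it contains exactly one vertex labeled c and no 1-edge (u,v) with (ℓ(u),ℓ(v)) = (0,1), or it contains exactly one 1-edge (u,v) with (ℓ(u),ℓ(v)) = (0,1) and no vertex labeled c. -/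
import Mathlib


/-- The three-element label set `{0, c, 1}`. -/
inductive Lab : Type
  | zero | c | one
deriving DecidableEq

/-- A maximal directed path (a "string") in a digraph `E`: a sequence of distinct
vertices `p 0, …, p n` with consecutive edges, whose first vertex has no entering
edge and whose last vertex has no leaving edge. -/
def IsMaxPath {V : Type*} (E : V → V → Prop) (n : ℕ) (p : Fin (n + 1) → V) : Prop :=
  Function.Injective p ∧
  (∀ i : Fin n, E (p i.castSucc) (p i.succ)) ∧
  (∀ u : V, ¬ E u (p 0)) ∧
  (∀ u : V, ¬ E (p (Fin.last n)) u)

/-- Axiom (B0) for one color: every vertex has at most one leaving and at most one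
entering edge of that color. -/
def AxiomB0 {V : Type*} (E : V → V → Prop) : Prop :=
  (∀ u v w : V, E u v → E u w → v = w) ∧ (∀ u v w : V, E u w → E v w → u = v)

/-- Local axiom (B1(i)): for each 1-edge `(u, v)`, the pair of labels `(ℓ u, ℓ v)` is
one of `(0,0), (0,c), (0,1), (c,1), (1,1)`. -/
def B1i {V : Type*} (E₁ : V → V → Prop) (ℓ : V → Lab) : Prop :=
  ∀ u v : V, E₁ u v →
    (ℓ u, ℓ v) ∈ ({(Lab.zero, Lab.zero), (Lab.zero, Lab.c), (Lab.zero, Lab.one),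
      (Lab.c, Lab.one), (Lab.one, Lab.one)} : Set (Lab × Lab))

/-- Local axiom (B1(ii)): if `v` has no entering 1-edge then `ℓ v ≠ 1`, and if `v` has
no leaving 1-edge then `ℓ v ≠ 0`. -/
def B1ii {V : Type*} (E₁ : V → V → Prop) (ℓ : V → Lab) : Prop :=
  ∀ v : V, ((∀ u : V, ¬ E₁ u v) → ℓ v ≠ Lab.one) ∧ ((∀ u : V, ¬ E₁ v u) → ℓ v ≠ Lab.zero)

/-- Local axiom (B2(i)): for each 2-edge `(u, v)`, the pair of labels `(ℓ u, ℓ v)` is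
one of `(1,1), (1,c), (c,0), (0,0)`. -/
def B2i {V : Type*} (E₂ : V → V → Prop) (ℓ : V → Lab) : Prop :=
  ∀ u v : V, E₂ u v →
    (ℓ u, ℓ v) ∈ ({(Lab.one, Lab.one), (Lab.one, Lab.c), (Lab.c, Lab.zero),
      (Lab.zero, Lab.zero)} : Set (Lab × Lab))

/-- Local axiom (B2(ii)): if `v` has no entering 2-edge then `ℓ v ≠ 0`, and if `v` has
no leaving 2-edge then `ℓ v ≠ 1`. -/
def B2ii {V : Type*} (E₂ : V → V → Prop) (ℓ : V → Lab) : Prop :=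
  ∀ v : V, ((∀ u : V, ¬ E₂ u v) → ℓ v ≠ Lab.zero) ∧ ((∀ u : V, ¬ E₂ v u) → ℓ v ≠ Lab.one)

/-- In a finite acyclic 2-edge-colored digraph satisfying (B0), with a labeling
satisfying (B1(i)) and (B1(ii)), every 1-string contains exactly one central element:
either exactly one vertex labeled `c` and no 1-edge with labels `(0,1)`, or exactly one
1-edge with labels `(0,1)` and no vertex labeled `c`. -/
theorem one_string_unique_central {V : Type*} [Fintype V] (E₁ E₂ : V → V → Prop)
    (hacyc : ∀ v : V, ¬ Relation.TransGen (fun a b => E₁ a b ∨ E₂ a b) v v)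
    (hB0₁ : AxiomB0 E₁) (hB0₂ : AxiomB0 E₂)
    (ℓ : V → Lab) (h1i : B1i E₁ ℓ) (h1ii : B1ii E₁ ℓ) :
    ∀ (n : ℕ) (p : Fin (n + 1) → V), IsMaxPath E₁ n p →
      ((∃! i : Fin (n + 1), ℓ (p i) = Lab.c) ∧
        (∀ j : Fin n, ¬ (ℓ (p j.castSucc) = Lab.zero ∧ ℓ (p j.succ) = Lab.one))) ∨
      ((∃! j : Fin n, ℓ (p j.castSucc) = Lab.zero ∧ ℓ (p j.succ) = Lab.one) ∧
        (∀ i : Fin (n + 1), ℓ (p i) ≠ Lab.c)) := by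
  intro n p hp
  obtain ⟨hinj, hedge, hfirst, hlast⟩ := hp
  -- step lemma: a non-zero label forces the next label to be one
  have hstep : ∀ i : Fin n, ℓ (p i.castSucc) ≠ Lab.zero → ℓ (p i.succ) = Lab.one := by
    intro i h
    have hm := h1i _ _ (hedge i)
    simp only [Set.mem_insert_iff, Set.mem_singleton_iff, Prod.mk.injEq] at hm
    rcases hm with ⟨h1, h2⟩ | ⟨h1, h2⟩ | ⟨h1, h2⟩ | ⟨h1, h2⟩ | ⟨h1, h2⟩ <;>
      first | exact h2 | exact absurd h1 h
  -- monotonicity along the path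
  have mono : ∀ j i : Fin (n + 1), i < j → ℓ (p i) ≠ Lab.zero → ℓ (p j) = Lab.one := by
    intro j
    induction j using Fin.induction with
    | zero => intro i hi; exact absurd hi (Fin.not_lt_zero i)
    | succ k ih =>
      intro i hi h0
      have hv : i.val ≤ k.val := by
        have := hi
        simp only [Fin.lt_def, Fin.val_succ] at this
        omega
      rcases eq_or_lt_of_le hv with heq | hlt
      · have hik : i = k.castSucc := by
          apply Fin.ext; simpa using heq
        exact hstep k (hik ▸ h0)
      · have hik : i < k.castSucc := by simpa [Fin.lt_def] using hlt
        have h1 := ih i hik h0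
        exact hstep k (by rw [h1]; intro hh; exact Lab.noConfusion hh)
  have hℓ0 : ℓ (p 0) ≠ Lab.one := (h1ii (p 0)).1 hfirst
  have hℓlast : ℓ (p (Fin.last n)) ≠ Lab.zero := (h1ii _).2 hlast
  by_cases hc : ∃ i : Fin (n + 1), ℓ (p i) = Lab.c
  · obtain ⟨i0, hi0⟩ := hc
    left
    constructor
    · refine ⟨i0, hi0, ?_⟩
      intro j hj
      rcases lt_trichotomy j i0 with h | h | h
      · have := mono i0 j h (by rw [hj]; intro hh; exact Lab.noConfusion hh)
        rw [this] at hi0; exact absurd hi0 (by intro hh; exact Lab.noConfusion hh)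
      · exact h
      · have := mono j i0 h (by rw [hi0]; intro hh; exact Lab.noConfusion hh)
        rw [this] at hj; exact absurd hj (by intro hh; exact Lab.noConfusion hh)
    · rintro j ⟨hz, ho⟩
      rcases lt_trichotomy i0 j.castSucc with h | h | h
      · have := mono j.castSucc i0 h (by rw [hi0]; intro hh; exact Lab.noConfusion hh)
        rw [this] at hz; exact Lab.noConfusion hz
      · rw [← h, hi0] at hz; exact Lab.noConfusion hz
      · have hle : j.succ ≤ i0 := by
          have := h
          simp only [Fin.lt_def, Fin.coe_castSucc] at this
          simp only [Fin.le_def, Fin.val_succ]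
          omega
        rcases eq_or_lt_of_le hle with heq | hlt
        · rw [← heq, ho] at hi0; exact Lab.noConfusion hi0
        · have := mono i0 j.succ hlt (by rw [ho]; intro hh; exact Lab.noConfusion hh)
          rw [this] at hi0; exact Lab.noConfusion hi0
  · push_neg at hc
    right
    refine ⟨?_, hc⟩
    have hz0 : ℓ (p 0) = Lab.zero := by
      cases h : ℓ (p 0) with
      | zero => rfl
      | c => exact absurd h (hc 0)
      | one => exact absurd h hℓ0
    have hone : ℓ (p (Fin.last n)) = Lab.one := by
      cases h : ℓ (p (Fin.last n)) with
      | zero => exact absurd h hℓlast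
      | c => exact absurd h (hc (Fin.last n))
      | one => rfl
    -- existence of a (0,1) transition edge
    obtain ⟨j, hj⟩ : ∃ j : Fin n, ℓ (p j.castSucc) = Lab.zero ∧ ℓ (p j.succ) = Lab.one := by
      by_contra h
      push_neg at h
      have allz : ∀ i : Fin (n + 1), ℓ (p i) = Lab.zero := by
        intro i
        induction i using Fin.induction with
        | zero => exact hz0
        | succ k ih =>
          cases hk : ℓ (p k.succ) with
          | zero => rfl
          | c => exact absurd hk (hc k.succ)
          | one => exact absurd hk (h k ih)
      rw [allz (Fin.last n)] at hone; exact Lab.noConfusion hone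
    -- uniqueness
    have key : ∀ a b : Fin n, ℓ (p a.succ) = Lab.one → ℓ (p b.castSucc) = Lab.zero →
        ¬ a < b := by
      intro a b h1 h2 hlt
      have hle : a.succ ≤ b.castSucc := by
        have := hlt
        simp only [Fin.lt_def] at this
        simp only [Fin.le_def, Fin.val_succ, Fin.coe_castSucc]
        omega
      rcases eq_or_lt_of_le hle with heq | hlt'
      · rw [← heq, h1] at h2; exact Lab.noConfusion h2
      · have := mono b.castSucc a.succ hlt' (by rw [h1]; intro hh; exact Lab.noConfusion hh)
        rw [this] at h2; exact Lab.noConfusion h2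
    refine ⟨j, hj, ?_⟩
    rintro j' ⟨hz', ho'⟩
    rcases lt_trichotomy j' j with h | h | h
    · exact absurd h (key j' j ho' hj.1)
    · exact h
    · exact absurd h (key j j' hj.2 hz')
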